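/- arXiv:1605.09493 — 8 statements merged into one kernel-verified Lean document; each statement's English description precedes it below -/
import Mathlib

section
/- A joint pmf p belongs to 𝒫* if and only if r*(p) ∈ R(p). Equivalently, 𝒫* = { p : r*(p) ∈ R(p) }. -/
open Finset Real

namespace MWRC

variable {L : ℕ} {W : Fin L → Type*} [∀ i, Fintype (W i)] [∀ i, DecidableEq (W i)]

/-- `p` is a joint probability mass function on `𝒲_1 × ⋯ × 𝒲_L`. -/
def IsPMF (p : (∀ i, W i) → ℝ) : Prop :=
  (∀ x, 0 ≤ p x) ∧ ∑ x : ∀ i, W i, p x = 1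

/-- Marginal of `p` on the coordinates in `A`. -/
noncomputable def marg (p : (∀ i, W i) → ℝ) (A : Finset (Fin L))
    (y : ∀ i : {a : Fin L // a ∈ A}, W i.1) : ℝ :=
  ∑ x : ∀ i, W i, if (fun j : {a : Fin L // a ∈ A} => x j.1) = y then p x else 0

/-- Base-2 Shannon entropy `H(W_A)` of the marginal of `p` on the coordinates in `A`
(with the convention `0 · log 0 = 0`, which is automatic since `logb 2 0 = 0`). -/
noncomputable def margEnt (p : (∀ i, W i) → ℝ) (A : Finset (Fin L)) : ℝ :=
  -∑ y : ∀ i : {a : Fin L // a ∈ A}, W i.1, marg p A y * Real.logb 2 (marg p A y)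

/-- Conditional entropy `H(W_A | W_B) = H(W_{A ∪ B}) - H(W_B)`. -/
noncomputable def condEnt (p : (∀ i, W i) → ℝ) (A B : Finset (Fin L)) : ℝ :=
  margEnt p (A ∪ B) - margEnt p B

/-- Conditional mutual information
`I(W_A; W_B | W_C) = H(W_A|W_C) + H(W_B|W_C) - H(W_{A∪B}|W_C)`. -/
noncomputable def condMI (p : (∀ i, W i) → ℝ) (A B C : Finset (Fin L)) : ℝ :=
  condEnt p A C + condEnt p B C - condEnt p (A ∪ B) C

/-- The region `R(p)`. -/
def Rset (p : (∀ i, W i) → ℝ) : Set (Fin L → ℝ) :=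
  {r | (∀ ℓ, 0 ≤ r ℓ) ∧
    ∀ S : Finset (Fin L), S ⊂ Finset.univ → condEnt p S Sᶜ ≤ ∑ i ∈ S, r i}

/-- `‖h(p)‖ = Σ_ℓ H(W_{ℓᶜ} | W_ℓ)`. -/
noncomputable def hNorm (p : (∀ i, W i) → ℝ) : ℝ :=
  ∑ ℓ : Fin L, condEnt p {ℓ}ᶜ {ℓ}

/-- `r*(p)`, with `r*_ℓ = ‖h(p)‖/(L-1) - H(W_{ℓᶜ}|W_ℓ)`. -/
noncomputable def rstar (p : (∀ i, W i) → ℝ) : Fin L → ℝ :=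
  fun ℓ => hNorm p / ((L : ℝ) - 1) - condEnt p {ℓ}ᶜ {ℓ}

/-- Membership in the class `𝒫*`. -/
def Pstar (p : (∀ i, W i) → ℝ) : Prop :=
  ∃ r ∈ Rset p, ∀ ℓ : Fin L, ∑ i ∈ ({ℓ}ᶜ : Finset (Fin L)), r i = condEnt p {ℓ}ᶜ {ℓ}

/-- Conditional multiple-mutual information `I_K` (with `I_∅ = 0`). -/
noncomputable def multiInfo (p : (∀ i, W i) → ℝ) (K : Finset (Fin L)) : ℝ :=
  ∑ t ∈ Finset.Icc 1 K.card, (-1 : ℝ) ^ (t - 1) *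
    ∑ T ∈ K.powerset.filter (fun T => T.card = t), condEnt p T Kᶜ

/-- `μ̄_k`: the largest `I_S` over subsets of cardinality `k`. -/
noncomputable def muMax (p : (∀ i, W i) → ℝ) (k : ℕ) : ℝ :=
  sSup {x | ∃ S : Finset (Fin L), S.card = k ∧ multiInfo p S = x}

/-- `μ̲_k`: the smallest `I_S` over subsets of cardinality `k`. -/
noncomputable def muMin (p : (∀ i, W i) → ℝ) (k : ℕ) : ℝ :=
  sInf {x | ∃ S : Finset (Fin L), S.card = k ∧ multiInfo p S = x}

/-- `gap_k = 1 + (1/k)·(L−1)/(2L−k−3)`. -/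
noncomputable def gap (L k : ℕ) : ℝ :=
  1 + (1 / (k : ℝ)) * (((L : ℝ) - 1) / (2 * (L : ℝ) - (k : ℝ) - 3))

/-- A source is balanced if `μ̄_k ≤ gap_k · μ̲_k` for all `k ∈ [2, L-1]`. -/
def Balanced (p : (∀ i, W i) → ℝ) : Prop :=
  ∀ k ∈ Finset.Icc 2 (L - 1), muMax p k ≤ gap L k * muMin p k

/-- `J_ℓ(K)`. -/
noncomputable def J (p : (∀ i, W i) → ℝ) (ℓ : Fin L) (K : Finset (Fin L)) : ℝ :=
  if ℓ ∈ K then (((L : ℝ) - (K.card : ℝ)) / ((L : ℝ) - 1)) * multiInfo p K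
  else ((1 - (K.card : ℝ)) / ((L : ℝ) - 1)) * multiInfo p K

/-- `r†_ℓ = Σ_{K ⊂ [1,L]} J_ℓ(K)`, the sum over all strict subsets of `[1,L]`. -/
noncomputable def rdag (p : (∀ i, W i) → ℝ) : Fin L → ℝ :=
  fun ℓ => ∑ K ∈ Finset.univ.powerset.filter (fun K => K ≠ Finset.univ), J p ℓ K

end MWRC


open MWRC Finset

theorem Finset.sum_compl_singleton_eq_sub {ι G : Type*} [Fintype ι] [DecidableEq ι]
    [AddCommGroup G] (f : ι → G) (a : ι) :
    ∑ i ∈ ({a}ᶜ : Finset ι), f i = ∑ i, f i - f a := by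
  rw [← sum_compl_add_sum {a} f, sum_singleton, add_sub_cancel_right]

/-- Summing the equations over `a` forces `∑ r = (∑ h) / (card ι - 1)`. -/
theorem sum_compl_singleton_eq_iff {ι K : Type*} [Fintype ι] [DecidableEq ι] [Field K]
    (hι : (Fintype.card ι : K) ≠ 1) (r h : ι → K) :
    (∀ a, ∑ i ∈ ({a}ᶜ : Finset ι), r i = h a) ↔
      r = fun a => (∑ i, h i) / (Fintype.card ι - 1) - h a := by
  have hι' : (Fintype.card ι : K) - 1 ≠ 0 := sub_ne_zero.mpr hι
  simp only [sum_compl_singleton_eq_sub]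
  constructor
  · intro hr
    have htotal : (∑ i, h i) / (Fintype.card ι - 1) = ∑ i, r i := by
      rw [div_eq_iff hι', ← sum_congr rfl fun a _ => hr a, sum_sub_distrib, sum_const,
        card_univ, nsmul_eq_mul]
      ring
    funext a
    rw [htotal, ← hr a, sub_sub_cancel]
  · rintro rfl a
    have htotal : ∑ i, ((∑ j, h j) / (Fintype.card ι - 1) - h i) =
        (∑ j, h j) / (Fintype.card ι - 1) := by
      rw [sum_sub_distrib, sum_const, card_univ, nsmul_eq_mul]
      field_simp
      ring
    rw [htotal, sub_sub_cancel]

theorem stmt1_general {L : ℕ} (hL : 2 ≤ L) {W : Fin L → Type*} [∀ i, Fintype (W i)]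
    [∀ i, DecidableEq (W i)] (p : (∀ i, W i) → ℝ) :
    Pstar p ↔ rstar p ∈ Rset p := by
  have hL1 : (Fintype.card (Fin L) : ℝ) ≠ 1 := by
    rw [Fintype.card_fin, Nat.cast_ne_one]
    omega
  have hsolution : ∀ r : Fin L → ℝ,
      (∀ ℓ, ∑ i ∈ ({ℓ}ᶜ : Finset (Fin L)), r i = condEnt p {ℓ}ᶜ {ℓ}) ↔ r = rstar p := by
    intro r
    rw [sum_compl_singleton_eq_iff hL1, Fintype.card_fin]
    rfl
  simp only [Pstar, hsolution, exists_eq_right]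

/-- `p ∈ 𝒫*` if and only if `r*(p) ∈ R(p)`. -/
theorem stmt1 {L : ℕ} (hL : 2 ≤ L) {W : Fin L → Type*} [∀ i, Fintype (W i)]
    [∀ i, DecidableEq (W i)] (p : (∀ i, W i) → ℝ) (hp : IsPMF p) :
    Pstar p ↔ rstar p ∈ Rset p :=
  stmt1_general hL p
end

section
/- For fixed finite alphabets 𝒲_1,…,𝒲_L, the set 𝒫* is a closed subset of the probability simplex of joint pmfs on 𝒲_1×⋯×𝒲_L (with the subspace topology inherited from ℝ^{𝒲_1×⋯×𝒲_L}). -/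
open Finset Real

/-!
A certificate `r` of `p ∈ 𝒫*` satisfies `0 ≤ r_i ≤ H(W_{ℓᶜ} | W_ℓ)` for every `ℓ ≠ i` (which
exists as `L ≥ 2`), and these entropies are continuous, hence bounded, on the compact simplex.
So the pairs `(p, r)` with `r` a certificate of `p` form a closed subset of a compact set, and
`𝒫*` is its projection: a compact, hence closed, set.
-/

namespace MWRC

variable {L : ℕ} {W : Fin L → Type*} [∀ i, Fintype (W i)] [∀ i, DecidableEq (W i)]

lemma continuous_marg (A : Finset (Fin L)) (y : ∀ i : {a : Fin L // a ∈ A}, W i.1) :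
    Continuous fun q : (∀ i, W i) → ℝ => marg q A y :=
  continuous_finsetSum _ fun x _ => by
    split_ifs
    exacts [continuous_apply x, continuous_const]

lemma continuous_margEnt (A : Finset (Fin L)) :
    Continuous fun q : (∀ i, W i) → ℝ => margEnt q A := by
  have hlogb : Continuous fun t : ℝ => t * logb 2 t := by
    simp only [logb, mul_div_assoc']
    exact continuous_mul_log.div_const _
  exact (continuous_finsetSum _ fun y _ => hlogb.comp (continuous_marg A y)).neg

lemma continuous_condEnt (A B : Finset (Fin L)) :
    Continuous fun q : (∀ i, W i) → ℝ => condEnt q A B :=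
  (continuous_margEnt (A ∪ B)).sub (continuous_margEnt B)

def PstarWitness (p : (∀ i, W i) → ℝ) (r : Fin L → ℝ) : Prop :=
  r ∈ Rset p ∧ ∀ ℓ : Fin L, ∑ i ∈ ({ℓ}ᶜ : Finset (Fin L)), r i = condEnt p {ℓ}ᶜ {ℓ}

lemma pstar_iff_exists_pstarWitness (p : (∀ i, W i) → ℝ) : Pstar p ↔ ∃ r, PstarWitness p r :=
  Iff.rfl

lemma isClosed_setOf_pstarWitness :
    IsClosed {x : ((∀ i, W i) → ℝ) × (Fin L → ℝ) | PstarWitness x.1 x.2} := by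
  simp only [PstarWitness, Rset, Set.mem_ofPred_eq]
  simp only [Set.ofPred_and, Set.ofPred_forall]
  refine .inter (.inter ?_ ?_) ?_
  · exact isClosed_iInter fun ℓ => isClosed_le continuous_const (by fun_prop)
  · refine isClosed_iInter fun S => isClosed_iInter fun _ => isClosed_le ?_ (by fun_prop)
    exact (continuous_condEnt S Sᶜ).comp continuous_fst
  · refine isClosed_iInter fun ℓ => isClosed_eq (by fun_prop) ?_
    exact (continuous_condEnt _ _).comp continuous_fst

lemma PstarWitness.le_condEnt {p : (∀ i, W i) → ℝ} {r : Fin L → ℝ} (h : PstarWitness p r)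
    {i ℓ : Fin L} (hiℓ : i ≠ ℓ) : r i ≤ condEnt p {ℓ}ᶜ {ℓ} := by
  rw [← h.2 ℓ]
  exact single_le_sum (fun j _ => h.1.1 j) (by simpa using hiℓ)

lemma PstarWitness.norm_le (hL : 2 ≤ L) {p : (∀ i, W i) → ℝ} {r : Fin L → ℝ}
    (h : PstarWitness p r) : ‖r‖ ≤ ‖fun ℓ : Fin L => condEnt p {ℓ}ᶜ {ℓ}‖ := by
  refine (pi_norm_le_iff_of_nonneg (norm_nonneg _)).2 fun i => ?_
  obtain ⟨ℓ, hℓ⟩ := Fintype.exists_ne_of_one_lt_card (by rwa [Fintype.card_fin]) i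
  rw [Real.norm_of_nonneg (h.1.1 i)]
  exact (h.le_condEnt hℓ.symm).trans <| (le_abs_self _).trans <|
    norm_le_pi_norm (fun ℓ : Fin L => condEnt p {ℓ}ᶜ {ℓ}) ℓ

end MWRC

open MWRC Finset

/-- For fixed finite alphabets, `𝒫*` is a closed subset of the
probability simplex of joint pmfs (with the subspace topology inherited from the
function space `ℝ^{𝒲_1 × ⋯ × 𝒲_L}`). -/
theorem stmt4 {L : ℕ} (hL : 2 ≤ L) {W : Fin L → Type*} [∀ i, Fintype (W i)]
    [∀ i, DecidableEq (W i)] :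
    IsClosed {p : {q : (∀ i, W i) → ℝ // IsPMF q} | Pstar p.1} := by
  set S := {q : (∀ i, W i) → ℝ // IsPMF q}
  have : CompactSpace S := isCompact_iff_compactSpace.mp (isCompact_stdSimplex ℝ (∀ i, W i))
  have hcondEnt : Continuous fun p : S => fun ℓ : Fin L => condEnt p.1 {ℓ}ᶜ {ℓ} :=
    continuous_pi fun ℓ => (continuous_condEnt _ _).comp continuous_subtype_val
  obtain ⟨R, hR⟩ := isCompact_univ.exists_bound_of_continuousOn hcondEnt.continuousOn
  set C := {x : S × (Fin L → ℝ) | PstarWitness x.1.1 x.2}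
  have hC : IsCompact C := by
    refine (isCompact_univ.prod (isCompact_closedBall 0 R)).of_isClosed_subset ?_ ?_
    · exact isClosed_setOf_pstarWitness.preimage (continuous_subtype_val.prodMap continuous_id)
    · rintro ⟨p, r⟩ hpr
      exact ⟨trivial, mem_closedBall_zero_iff.2 ((hpr.norm_le hL).trans (hR p trivial))⟩
  have hproj : {p : S | Pstar p.1} = Prod.fst '' C := by
    ext p
    simp [C, pstar_iff_exists_pstarWitness]
  rw [hproj]
  exact (hC.image continuous_fst).isClosed
end

section
/- For every integer L ≥ 3 there exist finite alphabets 𝒲_1,…,𝒲_L and joint pmfs p, p′ on 𝒲_1×⋯×𝒲_L with p ∈ 𝒫* and p′ ∈ 𝒫* such that the convex combination (p + p′)/2 does not belong to 𝒫*; that is, 𝒫* is not convex for any L ≥ 3. -/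
open Finset Real

/-!
Point masses lie in `𝒫*` with `r = 0`, since all their entropies vanish. The midpoint of the
point masses at `(0, …, 0)` and `(1, 1, 0, …, 0)` makes `W_1 = W_2` a fair bit and every other
coordinate constant, so `H(W_{ℓᶜ} | W_ℓ)` is `0` for `ℓ = 1, 2` and `1` for `ℓ = 3`. For a
nonnegative `r`, the two constraints `Σ_{i ∈ ℓᶜ} r_i = 0` (`ℓ = 1, 2`) force `r = 0`, which
violates the constraint for `ℓ = 3`.
-/

namespace MWRC

section Entropy

variable {α : Type*} [Fintype α] [DecidableEq α]

def dirac (c : α) : α → ℝ := fun x => if x = c then 1 else 0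

lemma entropy_midpoint_dirac (u v : α) :
    -∑ y, (dirac u y + dirac v y) / 2 * logb 2 ((dirac u y + dirac v y) / 2)
      = if u = v then 0 else 1 := by
  by_cases huv : u = v
  · subst huv
    rw [if_pos rfl, neg_eq_zero]
    simp only [add_self_div_two]
    exact sum_eq_zero fun y _ => by unfold dirac; split_ifs <;> simp
  · have hterm : ∀ y, (dirac u y + dirac v y) / 2 * logb 2 ((dirac u y + dirac v y) / 2)
        = -((dirac u y + dirac v y) / 2) := by
      intro y
      by_cases hu : y = u
      · subst hu; simp [dirac, huv]
      · by_cases hv : y = v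
        · subst hv; simp [dirac, hu]
        · simp [dirac, hu, hv]
    simp only [hterm, sum_neg_distrib, neg_neg, ← sum_div, sum_add_distrib]
    simp [dirac, huv]

end Entropy

variable {L : ℕ} {W : Fin L → Type*} [∀ i, Fintype (W i)]

lemma IsPMF.midpoint {p q : (∀ i, W i) → ℝ} (hp : IsPMF p) (hq : IsPMF q) :
    IsPMF (fun x => (p x + q x) / 2) :=
  ⟨fun x => by linarith [hp.1 x, hq.1 x], by
    rw [← sum_div, sum_add_distrib, hp.2, hq.2]; norm_num⟩

variable [∀ i, DecidableEq (W i)]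

lemma IsPMF.dirac (c : ∀ i, W i) : IsPMF (dirac c) :=
  ⟨fun x => by unfold MWRC.dirac; split_ifs <;> norm_num, by simp [MWRC.dirac]⟩

lemma marg_dirac (c : ∀ i, W i) (A : Finset (Fin L)) :
    marg (dirac c) A = dirac (A.restrict c) := by
  funext y
  rw [marg, sum_eq_single c (fun x _ hx => by simp [dirac, hx]) (by simp)]
  simp [dirac, eq_comm]
  rfl

lemma marg_midpoint (p q : (∀ i, W i) → ℝ) (A : Finset (Fin L)) :
    marg (fun x => (p x + q x) / 2) A = fun y => (marg p A y + marg q A y) / 2 := by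
  funext y
  simp only [marg, ← sum_add_distrib, sum_div]
  exact sum_congr rfl fun x _ => by split_ifs <;> simp

lemma margEnt_midpoint_dirac (c d : ∀ i, W i) (A : Finset (Fin L)) :
    margEnt (fun x => (dirac c x + dirac d x) / 2) A
      = if A.restrict c = A.restrict d then 0 else 1 := by
  rw [margEnt, marg_midpoint, marg_dirac, marg_dirac, entropy_midpoint_dirac]

lemma margEnt_dirac (c : ∀ i, W i) (A : Finset (Fin L)) : margEnt (dirac c) A = 0 := by
  simpa using margEnt_midpoint_dirac c c A

lemma Pstar_dirac (c : ∀ i, W i) : Pstar (dirac c) :=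
  ⟨0, ⟨fun _ => le_rfl, fun S _ => by simp [condEnt, margEnt_dirac]⟩,
    fun ℓ => by simp [condEnt, margEnt_dirac]⟩

lemma condEnt_compl_singleton (p : (∀ i, W i) → ℝ) (ℓ : Fin L) :
    condEnt p {ℓ}ᶜ {ℓ} = margEnt p univ - margEnt p {ℓ} := by
  rw [condEnt, union_comm, union_compl]

lemma not_Pstar_of_condEnt_eq_zero {p : (∀ i, W i) → ℝ} {i j k : Fin L} (hij : i ≠ j)
    (hi : condEnt p {i}ᶜ {i} = 0) (hj : condEnt p {j}ᶜ {j} = 0)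
    (hk : condEnt p {k}ᶜ {k} ≠ 0) : ¬ Pstar p := by
  rintro ⟨r, ⟨hr_nonneg, -⟩, hr⟩
  have hzero : ∀ {ℓ m}, condEnt p {ℓ}ᶜ {ℓ} = 0 → m ≠ ℓ → r m = 0 := fun hℓ hm =>
    (sum_eq_zero_iff_of_nonneg fun m _ => hr_nonneg m).mp ((hr _).trans hℓ) _ (by simpa using hm)
  have hr_zero : r = 0 := funext fun m =>
    if hm : m = i then hzero hj (hm ▸ hij) else hzero hi hm
  exact hk (by simpa [hr_zero] using (hr k).symm)

end MWRC

open MWRC Finset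

/-- For every `L ≥ 3` there are finite alphabets and joint pmfs
`p, p' ∈ 𝒫*` whose midpoint `(p + p')/2` is not in `𝒫*`: `𝒫*` is not convex. -/
theorem stmt5 (L : ℕ) (hL : 3 ≤ L) :
    ∃ (n : Fin L → ℕ) (p p' : (∀ i, Fin (n i)) → ℝ),
      IsPMF p ∧ IsPMF p' ∧ Pstar p ∧ Pstar p' ∧
        IsPMF (fun x => (p x + p' x) / 2) ∧
        ¬ Pstar (fun x => (p x + p' x) / 2) := by
  let a : ∀ i : Fin L, Fin 2 := fun _ => 0
  let b : ∀ i : Fin L, Fin 2 := fun i => if i.val < 2 then 1 else 0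
  refine ⟨fun _ => 2, dirac a, dirac b, .dirac a, .dirac b, Pstar_dirac a, Pstar_dirac b,
    (IsPMF.dirac a).midpoint (.dirac b), ?_⟩
  have hrestrict : ∀ A : Finset (Fin L), A.restrict a = A.restrict b ↔ ∀ i ∈ A, 1 < i.val := by
    intro A
    simp [a, b, funext_iff]
  have hnot_all : ¬ ∀ i : Fin L, 1 < i.val := fun h => absurd (h ⟨0, by omega⟩) (by simp)
  refine not_Pstar_of_condEnt_eq_zero (i := ⟨0, by omega⟩) (j := ⟨1, by omega⟩)
    (k := ⟨2, by omega⟩) (by simp) ?_ ?_ ?_ <;>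
    simp [condEnt_compl_singleton, margEnt_midpoint_dirac, hrestrict, hnot_all]
end

section
/- Let L = 3. If the source (W_1,W_2,W_3) ~ p satisfies I(W_i;W_j|W_k) ≤ I(W_j;W_k|W_i) + I(W_i;W_k|W_j) for all choices of distinct indices i,j,k ∈ [1,3], then p ∈ 𝒫*; in particular the tuple r* with components r*_1 = ½(H(W_1,W_2|W_3) + H(W_1,W_3|W_2) − H(W_2,W_3|W_1)), r*_2 = ½(H(W_1,W_2|W_3) + H(W_2,W_3|W_1) − H(W_1,W_3|W_2)), r*_3 = ½(H(W_1,W_3|W_2) + H(W_2,W_3|W_1) − H(W_1,W_2|W_3)) belongs to R(p). -/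
/-!
For three sources the tuple `r*` is `rstar p`, i.e.
`r*_ℓ = ½ Σ_m H(W_{mᶜ}|W_m) − H(W_{ℓᶜ}|W_ℓ)`. For any `L`, the sum of `r*` over `ℓᶜ` is exactly
`H(W_{ℓᶜ}|W_ℓ)`, so `r* ∈ R(p)` already gives `p ∈ 𝒫*`, and for `L = 3` these are the constraints of
`R(p)` on two-element sets. The singleton constraints remain: twice the slack
`r*_k − H(W_k|W_{kᶜ})` equals `I(W_j;W_k|W_i) + I(W_i;W_k|W_j) − I(W_i;W_j|W_k)`, which is nonnegative
by hypothesis. Nonnegativity of `r*` follows, since conditional entropy is nonnegative.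
-/

open Finset Real

namespace MWRC

variable {L : ℕ} {W : Fin L → Type*} [∀ i, Fintype (W i)] [∀ i, DecidableEq (W i)]

section Entropy

variable {p : (∀ i, W i) → ℝ}

lemma marg_univ (x : ∀ i, W i) : marg p univ (fun j => x j.1) = p x := by
  rw [marg, sum_eq_single_of_mem x (mem_univ x) fun x' _ hne => if_neg fun h =>
    hne (funext fun i => congrFun h ⟨i, mem_univ i⟩), if_pos rfl]

lemma marg_anti (hp : ∀ x, 0 ≤ p x) {A B : Finset (Fin L)} (hAB : A ⊆ B) (x : ∀ i, W i) :
    marg p B (fun j => x j.1) ≤ marg p A (fun j => x j.1) := by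
  refine sum_le_sum fun x' _ => ?_
  split_ifs with hB hA hA
  · exact le_rfl
  · exact (hA (funext fun j => congrFun hB ⟨j.1, hAB j.2⟩)).elim
  · exact hp x'
  · exact le_rfl

lemma le_marg (hp : ∀ x, 0 ≤ p x) (A : Finset (Fin L)) (x : ∀ i, W i) :
    p x ≤ marg p A (fun j => x j.1) :=
  (marg_univ x).symm.trans_le (marg_anti hp (subset_univ A) x)

lemma margEnt_eq_sum_logb_marg (A : Finset (Fin L)) :
    margEnt p A = -∑ x, p x * logb 2 (marg p A (fun j => x j.1)) := by
  rw [margEnt, ← sum_fiberwise univ (fun (x : ∀ i, W i) (j : {a // a ∈ A}) => x j.1)]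
  congr 1
  refine sum_congr rfl fun y _ => ?_
  rw [marg, ← sum_filter, sum_mul]
  exact sum_congr rfl fun x hx => by rw [(mem_filter.1 hx).2, marg, sum_filter]

lemma margEnt_mono (hp : ∀ x, 0 ≤ p x) {A B : Finset (Fin L)} (hAB : A ⊆ B) :
    margEnt p A ≤ margEnt p B := by
  rw [margEnt_eq_sum_logb_marg, margEnt_eq_sum_logb_marg, neg_le_neg_iff]
  refine sum_le_sum fun x _ => ?_
  rcases (hp x).eq_or_lt with hx | hx
  · simp [← hx]
  · exact mul_le_mul_of_nonneg_left (logb_le_logb_of_le one_lt_two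
      (hx.trans_le (le_marg hp B x)) (marg_anti hp hAB x)) hx.le

lemma condEnt_nonneg (hp : ∀ x, 0 ≤ p x) (A B : Finset (Fin L)) : 0 ≤ condEnt p A B :=
  sub_nonneg.2 (margEnt_mono hp subset_union_right)

lemma condEnt_compl_left (A : Finset (Fin L)) : condEnt p Aᶜ A = margEnt p univ - margEnt p A := by
  rw [condEnt, union_comm, union_compl]

lemma condEnt_compl_right (A : Finset (Fin L)) : condEnt p A Aᶜ = margEnt p univ - margEnt p Aᶜ := by
  rw [condEnt, union_compl]

end Entropy

section Rstar

variable {p : (∀ i, W i) → ℝ}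

lemma sum_compl_singleton_rstar (hL : L ≠ 1) (ℓ : Fin L) :
    ∑ i ∈ ({ℓ}ᶜ : Finset (Fin L)), rstar p i = condEnt p {ℓ}ᶜ {ℓ} := by
  have hL1 : (L : ℝ) - 1 ≠ 0 := sub_ne_zero.2 (by exact_mod_cast hL)
  have hcard : ((({ℓ}ᶜ : Finset (Fin L)).card : ℕ) : ℝ) = (L : ℝ) - 1 := by
    rw [card_compl, card_singleton, Fintype.card_fin, Nat.cast_sub ℓ.pos]
    norm_num
  have hsplit := sum_compl_add_sum {ℓ} fun i => condEnt p {i}ᶜ {i}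
  rw [sum_singleton] at hsplit
  simp only [rstar, sum_sub_distrib, sum_const, nsmul_eq_mul, hcard, mul_div_cancel₀ _ hL1]
  rw [hNorm, ← hsplit]
  ring

lemma pstar_of_rstar_mem_rset (hL : L ≠ 1) (h : rstar p ∈ Rset p) : Pstar p :=
  ⟨rstar p, h, sum_compl_singleton_rstar hL⟩

end Rstar

section FinThree

lemma fin_three_singleton_union_singleton {i j k : Fin 3} (hij : i ≠ j) (hjk : j ≠ k)
    (hik : i ≠ k) : ({i} ∪ {k} : Finset (Fin 3)) = {j}ᶜ := by
  revert i j k; decide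

lemma fin_three_union_singletons {i j k : Fin 3} (hij : i ≠ j) (hjk : j ≠ k) (hik : i ≠ k) :
    ({i} ∪ {j} ∪ {k} : Finset (Fin 3)) = univ := by
  revert i j k; decide

lemma fin_three_sum_eq {M : Type*} [AddCommMonoid M] (f : Fin 3 → M) {i j k : Fin 3}
    (hij : i ≠ j) (hjk : j ≠ k) (hik : i ≠ k) : ∑ ℓ, f ℓ = f i + f j + f k := by
  rw [← fin_three_union_singletons hij hjk hik, sum_union (by simp [hik.symm, hjk.symm]),
    sum_union (by simpa using hij), sum_singleton, sum_singleton, sum_singleton]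

lemma fin_three_ssubset_univ {S : Finset (Fin 3)} (hS : S ⊂ univ) :
    S = ∅ ∨ (∃ k, S = {k}) ∨ ∃ ℓ, S = {ℓ}ᶜ := by
  revert S; decide

lemma fin_three_exists_ne (k : Fin 3) : ∃ i j : Fin 3, i ≠ j ∧ j ≠ k ∧ i ≠ k := by
  revert k; decide

variable {W : Fin 3 → Type*} [∀ i, Fintype (W i)] [∀ i, DecidableEq (W i)]
  {p : (∀ i, W i) → ℝ}

lemma condMI_singletons_fin_three {i j k : Fin 3} (hij : i ≠ j) (hjk : j ≠ k) (hik : i ≠ k) :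
    condMI p {i} {j} {k} = margEnt p {i}ᶜ + margEnt p {j}ᶜ - margEnt p {k} - margEnt p univ := by
  rw [condMI, condEnt, condEnt, condEnt, fin_three_singleton_union_singleton hij hjk hik,
    fin_three_singleton_union_singleton hij.symm hik hjk, fin_three_union_singletons hij hjk hik]
  ring

lemma two_mul_rstar_sub_condEnt_fin_three {i j k : Fin 3} (hij : i ≠ j) (hjk : j ≠ k)
    (hik : i ≠ k) : 2 * (rstar p k - condEnt p {k} {k}ᶜ) =
      condMI p {j} {k} {i} + condMI p {i} {k} {j} - condMI p {i} {j} {k} := by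
  rw [condMI_singletons_fin_three hij hjk hik, condMI_singletons_fin_three hjk hik.symm hij.symm,
    condMI_singletons_fin_three hik hjk.symm hij, condEnt_compl_right]
  simp only [rstar, hNorm, condEnt_compl_left, fin_three_sum_eq _ hij hjk hik, Nat.cast_ofNat]
  ring

lemma condEnt_singleton_le_rstar_fin_three
    (hbal : ∀ i j k : Fin 3, i ≠ j → j ≠ k → i ≠ k →
      condMI p {i} {j} {k} ≤ condMI p {j} {k} {i} + condMI p {i} {k} {j}) (k : Fin 3) :
    condEnt p {k} {k}ᶜ ≤ rstar p k := by
  obtain ⟨i, j, hij, hjk, hik⟩ := fin_three_exists_ne k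
  have := two_mul_rstar_sub_condEnt_fin_three (p := p) hij hjk hik
  linarith [hbal i j k hij hjk hik]

lemma rstar_mem_rset_fin_three (hp : ∀ x, 0 ≤ p x)
    (hle : ∀ k, condEnt p {k} {k}ᶜ ≤ rstar p k) : rstar p ∈ Rset p := by
  refine ⟨fun k => (condEnt_nonneg hp _ _).trans (hle k), fun S hS => ?_⟩
  rcases fin_three_ssubset_univ hS with rfl | ⟨k, rfl⟩ | ⟨ℓ, rfl⟩
  · simp [condEnt]
  · simpa using hle k
  · rw [compl_compl, sum_compl_singleton_rstar (by norm_num)]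

lemma rstar_fin_three :
    rstar p = ![(condEnt p {0, 1} {2} + condEnt p {0, 2} {1} - condEnt p {1, 2} {0}) / 2,
      (condEnt p {0, 1} {2} + condEnt p {1, 2} {0} - condEnt p {0, 2} {1}) / 2,
      (condEnt p {0, 2} {1} + condEnt p {1, 2} {0} - condEnt p {0, 1} {2}) / 2] := by
  have h0 : ({0} : Finset (Fin 3))ᶜ = {1, 2} := by decide
  have h1 : ({1} : Finset (Fin 3))ᶜ = {0, 2} := by decide
  have h2 : ({2} : Finset (Fin 3))ᶜ = {0, 1} := by decide
  funext k
  fin_cases k <;> simp [rstar, hNorm, Fin.sum_univ_three, h0, h1, h2] <;> ring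

end FinThree

end MWRC


open MWRC Finset

/-- For `L = 3`: if `I(W_i;W_j|W_k) ≤ I(W_j;W_k|W_i) + I(W_i;W_k|W_j)`
for all distinct `i,j,k`, then `p ∈ 𝒫*`; in particular the explicit tuple `r*` belongs
to `R(p)`. -/
theorem stmt6 {W : Fin 3 → Type*} [∀ i, Fintype (W i)] [∀ i, DecidableEq (W i)]
    (p : (∀ i, W i) → ℝ) (hp : IsPMF p)
    (hbal : ∀ i j k : Fin 3, i ≠ j → j ≠ k → i ≠ k →
      condMI p {i} {j} {k} ≤ condMI p {j} {k} {i} + condMI p {i} {k} {j}) :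
    Pstar p ∧
      (![(condEnt p {0, 1} {2} + condEnt p {0, 2} {1} - condEnt p {1, 2} {0}) / 2,
         (condEnt p {0, 1} {2} + condEnt p {1, 2} {0} - condEnt p {0, 2} {1}) / 2,
         (condEnt p {0, 2} {1} + condEnt p {1, 2} {0} - condEnt p {0, 1} {2}) / 2] :
        Fin 3 → ℝ) ∈ Rset p := by
  have hmem := rstar_mem_rset_fin_three hp.1 (condEnt_singleton_le_rstar_fin_three hbal)
  exact ⟨pstar_of_rstar_mem_rset (by norm_num) hmem, rstar_fin_three (p := p) ▸ hmem⟩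
end

section
/- For every joint pmf p, the tuple r†(p) equals r*(p); that is, for every ℓ ∈ [1,L], Σ_{K⊂[1,L]} J_ℓ(K) = ‖h(p)‖/(L−1) − H(W_{ℓᶜ}|W_ℓ). Equivalently, r†(p) satisfies Σ_{i∈ℓᶜ} r†_i = H(W_{ℓᶜ}|W_ℓ) for every ℓ ∈ [1,L]. -/
open Finset Real

/-!
Write `f = margEnt p`. For `K ≠ ∅` the multiple mutual information is the alternating sum
`I_K = -∑_{T ⊆ K} (-1)^|T| f(T ∪ Kᶜ)`. Summing over all `K ∌ x` and collecting the coefficient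
of each `f B`, everything cancels except `B = {x}`; together with the correction coming from
`I_∅ = 0` this gives `∑_{K ∌ x} I_K = f(univ) - f({x}) = H(W_{xᶜ} | W_x)`.

Since `J_ℓ(K) = (|Kᶜ|/(L-1) - [ℓ ∉ K]) · I_K` and `|Kᶜ| = ∑_x [x ∉ K]`, summing over `K` yields
`r†_ℓ = ‖h(p)‖/(L-1) - H(W_{ℓᶜ} | W_ℓ) = r*_ℓ`; the second claim is then arithmetic.
-/

namespace Finset

variable {α R : Type*}

section CommRing

variable [CommRing R]

theorem sum_powerset_neg_one_pow_card' [DecidableEq α] (s : Finset α) :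
    ∑ T ∈ s.powerset, (-1 : R) ^ #T = if s = ∅ then 1 else 0 := by
  simpa [apply_ite] using congrArg (Int.cast : ℤ → R) (sum_powerset_neg_one_pow_card (x := s))

theorem sum_powerset_filter_mem_neg_one_pow_card [DecidableEq α] (s : Finset α) (x : α) :
    ∑ T ∈ s.powerset with x ∈ T, (-1 : R) ^ #T = -if s = {x} then 1 else 0 := by
  by_cases hx : x ∈ s
  · have hxs : x ∉ s.erase x := notMem_erase x s
    have hx_notMem : ∀ T ∈ (s.erase x).powerset, x ∉ T := fun T hT hxT =>
      hxs (mem_powerset.1 hT hxT)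
    rw [← insert_erase hx, sum_filter, sum_powerset_insert hxs,
      sum_eq_zero fun T hT => if_neg (hx_notMem T hT), zero_add,
      sum_congr rfl fun T hT => by
        rw [if_pos (mem_insert_self x T), card_insert_of_notMem (hx_notMem T hT), pow_succ,
          mul_neg_one],
      sum_neg_distrib, sum_powerset_neg_one_pow_card']
    simp only [insert_erase hx, erase_eq_empty_iff, ne_empty_of_mem hx, false_or]
  · rw [sum_filter, sum_eq_zero fun T hT => if_neg fun hxT => hx (mem_powerset.1 hT hxT),
      if_neg (by rintro rfl; exact hx (mem_singleton_self x)), neg_zero]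

theorem sum_Icc_neg_one_pow_mul_sum_powerset_filter_card (s : Finset α) (g : Finset α → R) :
    ∑ t ∈ Icc 1 #s, (-1 : R) ^ (t - 1) * ∑ T ∈ s.powerset with #T = t, g T =
      g ∅ - ∑ T ∈ s.powerset, (-1) ^ #T * g T := by
  have hsign : ∀ k, ∑ T ∈ powersetCard k s, (-1 : R) ^ #T * g T =
      (-1) ^ k * ∑ T ∈ powersetCard k s, g T := fun k => by
    rw [mul_sum]
    exact sum_congr rfl fun T hT => by rw [(mem_powersetCard.1 hT).2]
  rw [sum_powerset, sum_range_succ', ← Ico_add_one_right_eq_Icc, sum_Ico_eq_sum_range]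
  simp only [← powersetCard_eq_filter, powersetCard_zero, sum_singleton, card_empty, hsign,
    Nat.add_sub_cancel, add_comm 1, pow_succ]
  simp [sum_neg_distrib, mul_comm]

variable [Fintype α] [DecidableEq α]

theorem sum_powerset_compl_neg_one_pow_card_mul (f : Finset α → R) (M : Finset α) :
    ∑ T ∈ Mᶜ.powerset, (-1 : R) ^ #T * f (T ∪ M) =
      (-1) ^ #M * ∑ B with M ⊆ B, (-1) ^ #B * f B := by
  rw [mul_sum]
  refine sum_nbij' (· ∪ M) (· \ M) ?_ ?_ ?_ ?_ ?_
  · simp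
  · simp [subset_compl_iff_disjoint_right, disjoint_sdiff_self_left]
  · intro T hT
    exact union_sdiff_cancel_right (subset_compl_iff_disjoint_right.1 (mem_powerset.1 hT))
  · intro B hB
    exact sdiff_union_of_subset (mem_filter.1 hB).2
  · intro T hT
    rw [card_union_of_disjoint (subset_compl_iff_disjoint_right.1 (mem_powerset.1 hT)), pow_add]
    ring_nf
    simp

theorem sum_filter_notMem_sum_powerset_neg_one_pow_card_mul (f : Finset α → R) (x : α) :
    ∑ K with x ∉ K, ∑ T ∈ K.powerset, (-1 : R) ^ #T * f (T ∪ Kᶜ) = f {x} := by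
  calc ∑ K with x ∉ K, ∑ T ∈ K.powerset, (-1 : R) ^ #T * f (T ∪ Kᶜ)
      = ∑ M with x ∈ M, ∑ T ∈ Mᶜ.powerset, (-1 : R) ^ #T * f (T ∪ M) :=
        sum_nbij' compl compl (by simp) (by simp) (by simp) (by simp) (by simp)
    _ = ∑ M with x ∈ M, ∑ B with M ⊆ B, (-1) ^ #M * ((-1 : R) ^ #B * f B) := by
        simp only [sum_powerset_compl_neg_one_pow_card_mul, mul_sum]
    _ = ∑ B, (-1) ^ #B * f B * ∑ M ∈ B.powerset with x ∈ M, (-1 : R) ^ #M := by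
        simp only [mul_sum]
        refine sum_comm' (fun M B => ?_) |>.trans
          (sum_congr rfl fun B _ => sum_congr rfl fun M _ => by ring)
        simp only [mem_filter, mem_univ, true_and, mem_powerset]
        tauto
    _ = f {x} := by
        simp [sum_powerset_filter_mem_neg_one_pow_card]

end CommRing

theorem sum_card_compl_mul [Fintype α] [DecidableEq α] [Semiring R] (g : Finset α → R) :
    ∑ K, (#Kᶜ : R) * g K = ∑ x, ∑ K with x ∉ K, g K := by
  simp only [← nsmul_eq_mul, ← sum_const]
  exact sum_comm' fun K x => by simp

end Finset

namespace MWRC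

theorem cast_sub_one_ne_zero {L : ℕ} (hL : 2 ≤ L) : (L : ℝ) - 1 ≠ 0 := by
  have : (2 : ℝ) ≤ L := by exact_mod_cast hL
  linarith

variable {L : ℕ} {W : Fin L → Type*} [∀ i, Fintype (W i)] [∀ i, DecidableEq (W i)]
  (p : (∀ i, W i) → ℝ)

theorem multiInfo_eq_sum_powerset (K : Finset (Fin L)) :
    multiInfo p K = (if K = ∅ then margEnt p Kᶜ else 0) -
      ∑ T ∈ K.powerset, (-1) ^ #T * margEnt p (T ∪ Kᶜ) := by
  rw [multiInfo, sum_Icc_neg_one_pow_mul_sum_powerset_filter_card]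
  simp only [condEnt, empty_union, sub_self, mul_sub, sum_sub_distrib, ← sum_mul,
    sum_powerset_neg_one_pow_card']
  split_ifs <;> ring

theorem sum_filter_notMem_multiInfo (ℓ : Fin L) :
    ∑ K with ℓ ∉ K, multiInfo p K = condEnt p {ℓ}ᶜ {ℓ} := by
  simp only [multiInfo_eq_sum_powerset, sum_sub_distrib,
    sum_filter_notMem_sum_powerset_neg_one_pow_card_mul, sum_ite_eq', condEnt,
    union_comm _ {ℓ}, union_compl]
  simp

theorem J_eq_mul_multiInfo (hL : 2 ≤ L) (ℓ : Fin L) (K : Finset (Fin L)) :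
    J p ℓ K = ((#Kᶜ : ℝ) / (L - 1) - if ℓ ∉ K then 1 else 0) * multiInfo p K := by
  have hL' := cast_sub_one_ne_zero hL
  have hcard : (#Kᶜ : ℝ) = L - #K := by
    rw [card_compl, Fintype.card_fin, Nat.cast_sub (by simpa using card_le_univ K)]
  rw [J, hcard]
  split_ifs <;> field_simp <;> ring

theorem rdag_eq_sum_J (ℓ : Fin L) : rdag p ℓ = ∑ K, J p ℓ K := by
  rw [rdag, powerset_univ]
  refine sum_filter_of_ne fun K _ hJ hK => hJ ?_
  simp [hK, J]

theorem rdag_eq_rstar (hL : 2 ≤ L) (ℓ : Fin L) : rdag p ℓ = rstar p ℓ := by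
  calc rdag p ℓ
      = (∑ K, (#Kᶜ : ℝ) * multiInfo p K) / (L - 1) - ∑ K with ℓ ∉ K, multiInfo p K := by
        simp only [rdag_eq_sum_J, J_eq_mul_multiInfo p hL, sub_mul, sum_sub_distrib,
          div_mul_eq_mul_div, ← sum_div, ite_mul, one_mul, zero_mul, sum_filter]
    _ = hNorm p / (L - 1) - condEnt p {ℓ}ᶜ {ℓ} := by
        simp only [sum_card_compl_mul, sum_filter_notMem_multiInfo, hNorm]
    _ = rstar p ℓ := rfl

theorem sum_compl_rstar (hL : 2 ≤ L) (ℓ : Fin L) :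
    ∑ i ∈ {ℓ}ᶜ, rstar p i = condEnt p {ℓ}ᶜ {ℓ} := by
  have hL' := cast_sub_one_ne_zero hL
  have hsplit := sum_compl_add_sum {ℓ} fun i => condEnt p {i}ᶜ {i}
  rw [sum_singleton] at hsplit
  simp only [rstar, sum_sub_distrib, sum_const, card_compl, card_singleton, Fintype.card_fin,
    nsmul_eq_mul, hNorm, ← hsplit]
  rw [Nat.cast_sub (by omega)]
  field_simp
  ring

end MWRC

open MWRC Finset

theorem stmt11_general {L : ℕ} (hL : 2 ≤ L) {W : Fin L → Type*} [∀ i, Fintype (W i)]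
    [∀ i, DecidableEq (W i)] (p : (∀ i, W i) → ℝ) :
    (∀ ℓ : Fin L, rdag p ℓ = rstar p ℓ) ∧
      ∀ ℓ : Fin L, ∑ i ∈ ({ℓ}ᶜ : Finset (Fin L)), rdag p i = condEnt p {ℓ}ᶜ {ℓ} := by
  have hrdag : ∀ ℓ, rdag p ℓ = rstar p ℓ := rdag_eq_rstar p hL
  refine ⟨hrdag, fun ℓ => ?_⟩
  simp only [hrdag, sum_compl_rstar p hL]

/-- For every joint pmf `p`, `r†(p) = r*(p)`; equivalently
`Σ_{i ∈ ℓᶜ} r†_i = H(W_{ℓᶜ}|W_ℓ)` for every `ℓ`. -/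
theorem stmt11 {L : ℕ} (hL : 2 ≤ L) {W : Fin L → Type*} [∀ i, Fintype (W i)]
    [∀ i, DecidableEq (W i)] (p : (∀ i, W i) → ℝ) (hp : IsPMF p) :
    (∀ ℓ : Fin L, rdag p ℓ = rstar p ℓ) ∧
      ∀ ℓ : Fin L, ∑ i ∈ ({ℓ}ᶜ : Finset (Fin L)), rdag p i = condEnt p {ℓ}ᶜ {ℓ} :=
  stmt11_general hL p
end

section
/- Fix a strict subset S ⊂ [1,L] with |S| ≤ L−2 and for each k ∈ [1,L−1] set Γ_k := Σ_{K⊂[1,L], |K|=k} Σ_{i∈S} J_i(K). If the source (W_1,…,W_L) ~ p is balanced, then Γ_k ≥ Σ_{K⊆S, |K|=k} I_K for every k with 1 ≤ k ≤ |S|, and Γ_k ≥ 0 for every k with |S| < k ≤ L−1. -/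
open Finset Real

open MWRC Finset

/-!
Write `s = |S|`, `a = (L-k)/(L-1) ≥ 0` and `b = (1-k)/(L-1) ≤ 0`, so that
`Γ_k = Σ_{|K| = k} (a |K ∩ S| + b |S \ K|) I_K`. For `k = 1` the coefficient of `I_K` is exactly
`[K ⊆ S]`. For `k ≥ 2` the coefficient `k a + (s-k) b` of `I_K` for `K ⊆ S` is at least `1`; for
the other `K` we bound `I_K` from below by `μ̲_k` where it is multiplied by `a`, and from above by
`μ̄_k ≤ gap_k μ̲_k` where it is multiplied by `b`. Balance forces `μ̲_k ≥ 0`, and what is left is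
`μ̲_k` times an explicit binomial expression equal to
`(s (k+1) C(L-2,k) - C(s,k) (2k(L-2) - (k-1)s)) / (k (2L-k-3))`, whose numerator vanishes at
`L - 2 = s` and increases with `L`.
-/

namespace Finset

variable {α : Type*} [DecidableEq α]

theorem sum_ite_mem_of_subset {K S : Finset α} (hKS : K ⊆ S) (A B : ℝ) :
    ∑ i ∈ S, (if i ∈ K then A else B) = #K * A + (#S - #K) * B := by
  rw [sum_ite, sum_const, sum_const, filter_mem_eq_inter, inter_eq_right.2 hKS, filter_not,
    filter_mem_eq_inter, inter_eq_right.2 hKS, card_sdiff_of_subset hKS, nsmul_eq_mul,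
    nsmul_eq_mul, Nat.cast_sub (card_le_card hKS)]

theorem sum_powersetCard_ite_mem {u : Finset α} {i : α} (hi : i ∈ u) {k : ℕ} (hk : 1 ≤ k)
    (A B : ℝ) :
    ∑ K ∈ u.powersetCard k, (if i ∈ K then A else B)
      = (#u - 1).choose (k - 1) * A + (#u - 1).choose k * B := by
  have hmem : #{K ∈ u.powersetCard k | i ∈ K} = (#u - 1).choose (k - 1) := by
    simpa only [singleton_subset_iff, card_singleton] using
      card_filter_powersetCard_subset {i} u k (singleton_subset_iff.2 hi) hk
  have hnotMem : {K ∈ u.powersetCard k | i ∉ K} = (u.erase i).powersetCard k := by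
    ext K
    simp only [mem_filter, mem_powersetCard, subset_erase]
    tauto
  rw [sum_ite, sum_const, sum_const, hmem, hnotMem, card_powersetCard, card_erase_of_mem hi,
    nsmul_eq_mul, nsmul_eq_mul]

theorem filter_powerset_card_eq_and_ne_univ {n k : ℕ} (hk : k < n) :
    (univ : Finset (Fin n)).powerset.filter (fun K ↦ #K = k ∧ K ≠ univ) = univ.powersetCard k := by
  ext K
  simp only [mem_filter, mem_powerset, mem_powersetCard, subset_univ, true_and,
    and_iff_left_iff_imp]
  rintro hK rfl
  rw [card_univ, Fintype.card_fin] at hK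
  omega

theorem le_sum_powersetCard_sum_ite_mul {u S : Finset α} (hSu : S ⊆ u) {k : ℕ} (hk : 1 ≤ k)
    {a b m M : ℝ} (ha : 0 ≤ a) (hb : b ≤ 0) {x : Finset α → ℝ}
    (hx : ∀ K ∈ u.powersetCard k, m ≤ x K ∧ x K ≤ M) :
    ∑ K ∈ S.powersetCard k, (k * a + (#S - k) * b) * x K
        + (#S * ((#u - 1).choose (k - 1) * (a * m) + (#u - 1).choose k * (b * M))
          - (#S).choose k * (k * (a * m) + (#S - k) * (b * M)))
      ≤ ∑ K ∈ u.powersetCard k, ∑ i ∈ S, (if i ∈ K then a else b) * x K := by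
  have hQP : S.powersetCard k ⊆ u.powersetCard k := powersetCard_mono hSu
  let G : Finset α → ℝ := fun K ↦ ∑ i ∈ S, if i ∈ K then a * m else b * M
  have hGu : ∑ K ∈ u.powersetCard k, G K
      = #S * ((#u - 1).choose (k - 1) * (a * m) + (#u - 1).choose k * (b * M)) := by
    rw [sum_comm, ← nsmul_eq_mul, ← sum_const]
    exact sum_congr rfl fun i hi ↦ sum_powersetCard_ite_mem (hSu hi) hk _ _
  have hGS : ∑ K ∈ S.powersetCard k, G K
      = (#S).choose k * (k * (a * m) + (#S - k) * (b * M)) := by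
    rw [← card_powersetCard, ← nsmul_eq_mul, ← sum_const]
    refine sum_congr rfl fun K hK ↦ ?_
    obtain ⟨hKS, hKk⟩ := mem_powersetCard.1 hK
    simp only [G]
    rw [sum_ite_mem_of_subset hKS, hKk]
  have hG_le : ∀ K ∈ u.powersetCard k \ S.powersetCard k,
      G K ≤ ∑ i ∈ S, (if i ∈ K then a else b) * x K := by
    intro K hK
    obtain ⟨hmK, hKM⟩ := hx K (mem_sdiff.1 hK).1
    refine sum_le_sum fun i _ ↦ ?_
    split_ifs
    · exact mul_le_mul_of_nonneg_left hmK ha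
    · exact mul_le_mul_of_nonpos_left hKM hb
  have hS : ∀ K ∈ S.powersetCard k, ∑ i ∈ S, (if i ∈ K then a else b) * x K
      = (k * a + (#S - k) * b) * x K := by
    intro K hK
    obtain ⟨hKS, hKk⟩ := mem_powersetCard.1 hK
    rw [← sum_mul, sum_ite_mem_of_subset hKS, hKk]
  rw [← sum_sdiff hQP, sum_congr rfl hS, ← hGu, ← hGS, ← sum_sdiff hQP (f := G)]
  linarith [sum_le_sum hG_le]

end Finset

namespace MWRC

theorem choose_mul_sub_le_mul_choose {s n k : ℕ} (hk : 1 ≤ k) (hsn : s ≤ n) :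
    (s.choose k : ℝ) * (2 * k * n - (k - 1) * s) ≤ s * (k + 1) * n.choose k := by
  obtain ⟨j, rfl⟩ : ∃ j, k = j + 1 := ⟨k - 1, by omega⟩
  induction n, hsn using Nat.le_induction with
  | base => exact le_of_eq (by ring)
  | succ n hsn ih =>
    have hdown : (j + 1 : ℝ) * s.choose (j + 1) ≤ s * n.choose j := by
      have hle : s.choose (j + 1) * (j + 1) ≤ s * n.choose j := by
        rw [Nat.choose_succ_right_eq, mul_comm]
        exact Nat.mul_le_mul (Nat.sub_le s j) (Nat.choose_le_choose j hsn)
      rw [mul_comm]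
      exact_mod_cast hle
    rw [Nat.choose_succ_succ']
    push_cast at ih ⊢
    nlinarith [mul_nonneg (Nat.cast_nonneg j : (0 : ℝ) ≤ j)
      (by positivity : (0 : ℝ) ≤ s * n.choose j)]

noncomputable def memCoeff (L k : ℕ) : ℝ := ((L : ℝ) - k) / ((L : ℝ) - 1)

noncomputable def nonMemCoeff (L k : ℕ) : ℝ := (1 - (k : ℝ)) / ((L : ℝ) - 1)

theorem one_le_mul_memCoeff_add_mul_nonMemCoeff {L k s : ℕ} (hk : 1 ≤ k) (hsL : s + 2 ≤ L) :
    1 ≤ k * memCoeff L k + (s - k) * nonMemCoeff L k := by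
  have hk' : (1 : ℝ) ≤ k := by exact_mod_cast hk
  have hsL' : (s : ℝ) + 2 ≤ L := by exact_mod_cast hsL
  have h : k * memCoeff L k + (s - k) * nonMemCoeff L k - 1
      = (k - 1) * (L - 1 - s) / (L - 1) := by
    have : (L : ℝ) - 1 ≠ 0 := by linarith
    unfold memCoeff nonMemCoeff
    field_simp
    ring
  have : (0 : ℝ) ≤ (k - 1) * (L - 1 - s) / (L - 1) :=
    div_nonneg (mul_nonneg (by linarith) (by linarith)) (by linarith)
  linarith

/-- The coefficient of `μ̲_k` left in the lower bound for `Γ_k - Σ_{K ⊆ S, |K| = k} I_K`,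
where `s = |S|`. -/
noncomputable def balanceMargin (L k s : ℕ) : ℝ :=
  s * (memCoeff L k * (L - 1).choose (k - 1) + nonMemCoeff L k * gap L k * (L - 1).choose k)
    - s.choose k * (1 + (s - k) * nonMemCoeff L k * (gap L k - 1))

theorem balanceMargin_eq {n k s : ℕ} (hk : 2 ≤ k) (hkn : k ≤ n + 1) :
    balanceMargin (n + 2) k s
      = (s * (k + 1) * n.choose k - s.choose k * (2 * k * n - (k - 1) * s))
        / (k * (2 * n + 1 - k)) := by
  obtain ⟨j, rfl⟩ : ∃ j, k = j + 2 := ⟨k - 2, by omega⟩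
  have hjn : (j : ℝ) + 1 ≤ n := by exact_mod_cast (by omega : j + 1 ≤ n)
  have hnj : (n : ℝ) - j ≠ 0 := by linarith
  have hC1 : ((n + 1).choose (j + 1) : ℝ) = (n + 1).choose (j + 2) * (j + 2) / (n - j) := by
    have h := congrArg (Nat.cast : ℕ → ℝ) (Nat.choose_succ_right_eq (n + 1) (j + 1))
    push_cast [Nat.cast_sub (by omega : j ≤ n)] at h
    rw [eq_div_iff hnj]
    linear_combination -h
  have hCn : (n.choose (j + 2) : ℝ) = (n + 1).choose (j + 2) * (n - j - 1) / (n + 1) := by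
    have h := congrArg (Nat.cast : ℕ → ℝ) (Nat.choose_mul_succ_eq n (j + 2))
    push_cast [Nat.cast_sub (by omega : j + 1 ≤ n)] at h
    rw [eq_div_iff (by positivity)]
    linear_combination h
  have hden : ((j + 2 : ℕ) : ℝ) * (2 * n + 1 - (j + 2 : ℕ)) ≠ 0 := by
    push_cast
    nlinarith
  have h1 : (n : ℝ) + 2 - 1 ≠ 0 := by linarith
  have h2 : 2 * ((n : ℝ) + 2) - (j + 2) - 3 ≠ 0 := by linarith
  rw [eq_div_iff hden, balanceMargin, show n + 2 - 1 = n + 1 by omega,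
    show j + 2 - 1 = j + 1 by omega, hC1, hCn]
  unfold memCoeff nonMemCoeff gap
  push_cast
  field_simp
  ring

theorem balanceMargin_nonneg {L k s : ℕ} (hk : 2 ≤ k) (hkL : k + 1 ≤ L) (hsL : s + 2 ≤ L) :
    0 ≤ balanceMargin L k s := by
  obtain ⟨n, rfl⟩ : ∃ n, L = n + 2 := ⟨L - 2, by omega⟩
  rw [balanceMargin_eq hk (by omega)]
  have hkn : (k : ℝ) ≤ n + 1 := by exact_mod_cast (by omega : k ≤ n + 1)
  apply div_nonneg (sub_nonneg.2 (choose_mul_sub_le_mul_choose (by omega) (by omega)))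
  nlinarith

theorem one_lt_gap {L k : ℕ} (hk : 1 ≤ k) (hkL : k + 3 < 2 * L) : 1 < gap L k := by
  have hk' : (1 : ℝ) ≤ k := by exact_mod_cast hk
  have hkL' : (k : ℝ) + 3 < 2 * L := by exact_mod_cast hkL
  have : 0 < 1 / (k : ℝ) * (((L : ℝ) - 1) / (2 * L - k - 3)) :=
    mul_pos (by positivity) (div_pos (by linarith) (by linarith))
  unfold gap
  linarith

variable {L : ℕ} {W : Fin L → Type*} [∀ i, Fintype (W i)] [∀ i, DecidableEq (W i)]

theorem J_eq_ite (p : (∀ i, W i) → ℝ) (ℓ : Fin L) (K : Finset (Fin L)) :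
    J p ℓ K = (if ℓ ∈ K then memCoeff L #K else nonMemCoeff L #K) * multiInfo p K := by
  unfold J memCoeff nonMemCoeff
  split_ifs <;> rfl

theorem finite_multiInfo_card_eq (p : (∀ i, W i) → ℝ) (k : ℕ) :
    {x | ∃ S : Finset (Fin L), #S = k ∧ multiInfo p S = x}.Finite :=
  (Set.finite_range (multiInfo p)).subset fun _ ⟨S, _, hS⟩ ↦ ⟨S, hS⟩

theorem muMin_le_multiInfo (p : (∀ i, W i) → ℝ) {K : Finset (Fin L)} {k : ℕ} (hK : #K = k) :
    muMin p k ≤ multiInfo p K :=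
  csInf_le (finite_multiInfo_card_eq p k).bddBelow ⟨K, hK, rfl⟩

theorem multiInfo_le_muMax (p : (∀ i, W i) → ℝ) {K : Finset (Fin L)} {k : ℕ} (hK : #K = k) :
    multiInfo p K ≤ muMax p k :=
  le_csSup (finite_multiInfo_card_eq p k).bddAbove ⟨K, hK, rfl⟩

theorem muMin_nonneg {p : (∀ i, W i) → ℝ} (hbal : Balanced p) {k : ℕ} (hk : 2 ≤ k)
    (hkL : k ≤ L - 1) : 0 ≤ muMin p k := by
  obtain ⟨K, -, hK⟩ := exists_subset_card_eq (s := (univ : Finset (Fin L))) (n := k)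
    (by rw [card_univ, Fintype.card_fin]; omega)
  have hgap := one_lt_gap (L := L) (k := k) (by omega) (by omega)
  have hbal_k := hbal k (mem_Icc.2 ⟨hk, hkL⟩)
  nlinarith [muMin_le_multiInfo p hK, multiInfo_le_muMax p hK]

theorem sum_multiInfo_le_sum_J {p : (∀ i, W i) → ℝ} (hbal : Balanced p) {S : Finset (Fin L)}
    (hS : #S ≤ L - 2) {k : ℕ} (hk : 1 ≤ k) (hkL : k ≤ L - 1) :
    ∑ K ∈ S.powersetCard k, multiInfo p K
      ≤ ∑ K ∈ univ.powersetCard k, ∑ i ∈ S, J p i K := by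
  have hJ : ∑ K ∈ univ.powersetCard k, ∑ i ∈ S, J p i K
      = ∑ K ∈ univ.powersetCard k, ∑ i ∈ S,
          (if i ∈ K then memCoeff L k else nonMemCoeff L k) * multiInfo p K := by
    refine sum_congr rfl fun K hK ↦ sum_congr rfl fun i _ ↦ ?_
    rw [J_eq_ite, (mem_powersetCard.1 hK).2]
  have hL : (k : ℝ) + 1 ≤ L := by exact_mod_cast (by omega : k + 1 ≤ L)
  have hmem : 0 ≤ memCoeff L k := div_nonneg (by linarith) (by linarith)
  have hnonMem : nonMemCoeff L k ≤ 0 :=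
    div_nonpos_of_nonpos_of_nonneg (by linarith [(by exact_mod_cast hk : (1 : ℝ) ≤ k)])
      (by linarith)
  rw [hJ]
  obtain rfl | hk2 := hk.eq_or_lt
  · have h := le_sum_powersetCard_sum_ite_mul (subset_univ S) le_rfl hmem hnonMem
      (x := multiInfo p) (m := muMin p 1) (M := muMax p 1) fun K hK ↦
        ⟨muMin_le_multiInfo p (mem_powersetCard.1 hK).2,
          multiInfo_le_muMax p (mem_powersetCard.1 hK).2⟩
    have h1 : memCoeff L 1 = 1 := by
      rw [memCoeff, Nat.cast_one, div_self]
      push_cast at hL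
      linarith
    have h0 : nonMemCoeff L 1 = 0 := by simp [nonMemCoeff]
    simpa [h1, h0] using h
  · have hbalk := hbal k (mem_Icc.2 ⟨hk2, hkL⟩)
    have h := le_sum_powersetCard_sum_ite_mul (subset_univ S) hk hmem hnonMem
      (x := multiInfo p) (m := muMin p k) (M := gap L k * muMin p k) fun K hK ↦
        ⟨muMin_le_multiInfo p (mem_powersetCard.1 hK).2,
          (multiInfo_le_muMax p (mem_powersetCard.1 hK).2).trans hbalk⟩
    rw [← mul_sum, card_univ, Fintype.card_fin] at h
    have hlow : (#S).choose k * muMin p k ≤ ∑ K ∈ S.powersetCard k, multiInfo p K := by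
      have := card_nsmul_le_sum (S.powersetCard k) (multiInfo p) (muMin p k) fun K hK ↦
        muMin_le_multiInfo p (mem_powersetCard.1 hK).2
      rwa [card_powersetCard, nsmul_eq_mul] at this
    have hmarg := mul_nonneg (muMin_nonneg hbal hk2 hkL)
      (balanceMargin_nonneg (L := L) (s := #S) hk2 (by omega) (by omega))
    unfold balanceMargin at hmarg
    have hc := one_le_mul_memCoeff_add_mul_nonMemCoeff (L := L) (s := #S) hk (by omega)
    linarith [mul_le_mul_of_nonneg_left hlow (sub_nonneg.2 hc)]

end MWRC

theorem stmt12_general {L : ℕ} {W : Fin L → Type*} [∀ i, Fintype (W i)]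
    [∀ i, DecidableEq (W i)] (p : (∀ i, W i) → ℝ)
    (hbal : Balanced p) (S : Finset (Fin L))
    (hScard : S.card ≤ L - 2) :
    (∀ k : ℕ, 1 ≤ k → k ≤ S.card →
        ∑ K ∈ S.powerset.filter (fun K => K.card = k), multiInfo p K ≤
          ∑ K ∈ Finset.univ.powerset.filter
              (fun K : Finset (Fin L) => K.card = k ∧ K ≠ Finset.univ),
            ∑ i ∈ S, J p i K) ∧
      (∀ k : ℕ, S.card < k → k ≤ L - 1 →
        0 ≤ ∑ K ∈ Finset.univ.powerset.filter
              (fun K : Finset (Fin L) => K.card = k ∧ K ≠ Finset.univ),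
            ∑ i ∈ S, J p i K) := by
  refine ⟨fun k hk hkS ↦ ?_, fun k hSk hkL ↦ ?_⟩
  · rw [filter_powerset_card_eq_and_ne_univ (by omega), ← powersetCard_eq_filter]
    exact sum_multiInfo_le_sum_J hbal hScard hk (by omega)
  · rw [filter_powerset_card_eq_and_ne_univ (by omega)]
    simpa [powersetCard_eq_empty.2 hSk] using sum_multiInfo_le_sum_J hbal hScard (by omega) hkL

/-- Fix a strict subset `S ⊂ [1,L]` with `|S| ≤ L−2` and set
`Γ_k := Σ_{K ⊂ [1,L], |K| = k} Σ_{i ∈ S} J_i(K)`. If the source is balanced then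
`Γ_k ≥ Σ_{K ⊆ S, |K| = k} I_K` for `1 ≤ k ≤ |S|`, and `Γ_k ≥ 0` for `|S| < k ≤ L−1`. -/
theorem stmt12 {L : ℕ} (hL : 2 ≤ L) {W : Fin L → Type*} [∀ i, Fintype (W i)]
    [∀ i, DecidableEq (W i)] (p : (∀ i, W i) → ℝ) (hp : IsPMF p)
    (hbal : Balanced p) (S : Finset (Fin L)) (hS : S ⊂ Finset.univ)
    (hScard : S.card ≤ L - 2) :
    (∀ k : ℕ, 1 ≤ k → k ≤ S.card →
        ∑ K ∈ S.powerset.filter (fun K => K.card = k), multiInfo p K ≤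
          ∑ K ∈ Finset.univ.powerset.filter
              (fun K : Finset (Fin L) => K.card = k ∧ K ≠ Finset.univ),
            ∑ i ∈ S, J p i K) ∧
      (∀ k : ℕ, S.card < k → k ≤ L - 1 →
        0 ≤ ∑ K ∈ Finset.univ.powerset.filter
              (fun K : Finset (Fin L) => K.card = k ∧ K ≠ Finset.univ),
            ∑ i ∈ S, J p i K) :=
  stmt12_general p hbal S hScard
end

section
/- Let L, k, t be integers with 2 ≤ k ≤ L−2 and k ≤ t ≤ L−2. Define α(k,t) := t·C(L−1,k) − (t−k)·C(t,k) and β(k,t) := t·C(L−1,k) − (L−1)·C(t,k), where C(n,k) is the binomial coefficient. Then α(k,t) > 0, β(k,t) > 0, and β(k,t)/α(k,t) ≥ ((k−1)/k)·(L−1)/(2L−k−3). -/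
/-!
Write `N = L - 1`. The quantity `k (2N - k - 1) β - (k - 1) N α` equals
`t (k + 1) (N - k) C(N,k) - N (2k(N - 1) - (k - 1) t) C(t,k)`, so all three claims reduce to
its nonnegativity (`α > 0` being immediate from `C(t,k) ≤ C(N,k)`). After division by `N t`
this says that `t ↦ (2k(N - 1) - (k - 1) t) C(t,k) / t`, which is nondecreasing on `[k, N - 1]`
by the recurrence `(t + 1) C(t,k) = (t + 1 - k) C(t + 1,k)`, is bounded by its value
`(k + 1) C(N - 1,k)` at `t = N - 1`.
-/

theorem cast_choose_mul_succ_eq (t k : ℕ) (hkt : k ≤ t + 1) :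
    (t.choose k : ℝ) * (t + 1) = ((t + 1).choose k : ℝ) * (t + 1 - k) := by
  have h := congrArg (Nat.cast (R := ℝ)) (Nat.choose_mul_succ_eq t k)
  push_cast [Nat.cast_sub hkt] at h
  exact h

theorem sub_mul_choose_div_le_succ {k t : ℕ} {a : ℝ} (hk : 1 ≤ k) (hkt : k ≤ t)
    (ha : (k : ℝ) * t ≤ a) :
    (a - (k - 1) * t) * t.choose k / t ≤
      (a - (k - 1) * (t + 1 : ℕ)) * (t + 1).choose k / (t + 1 : ℕ) := by
  have ht : (0 : ℝ) < t := by exact_mod_cast (hk.trans hkt)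
  have hk' : (1 : ℝ) ≤ k := by exact_mod_cast hk
  rw [div_le_div_iff₀ ht (by positivity)]
  have hrec := cast_choose_mul_succ_eq t k (by omega)
  have hdiff : (a - (k - 1) * (t + 1 : ℕ)) * (t + 1).choose k * t -
      (a - (k - 1) * t) * t.choose k * (t + 1 : ℕ) =
      (k - 1) * (a - k * t) * (t + 1).choose k := by
    push_cast
    linear_combination (-(a - (k - 1) * t)) * hrec
  have : 0 ≤ (k - 1) * (a - k * t) * ((t + 1).choose k : ℝ) := by
    have := sub_nonneg.2 ha
    have := sub_nonneg.2 hk'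
    positivity
  linarith

theorem monotoneOn_sub_mul_choose_div {k n : ℕ} {a : ℝ} (hk : 1 ≤ k) (ha : (k : ℝ) * n ≤ a) :
    MonotoneOn (fun t : ℕ => (a - (k - 1) * t) * t.choose k / t) (Set.Icc k n) := by
  refine monotoneOn_of_le_succ Set.ordConnected_Icc fun t _ ht ht' => ?_
  rw [Order.succ_eq_add_one] at ht' ⊢
  refine sub_mul_choose_div_le_succ hk ht.1 (le_trans ?_ ha)
  have : (t : ℝ) ≤ n := by exact_mod_cast ht'.2.trans' (Nat.le_succ t)
  gcongr

theorem sub_mul_choose_le_mul_choose (L k t : ℕ) (hk : 1 ≤ k) (hkt : k ≤ t) (htL : t + 2 ≤ L) :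
    ((L : ℝ) - 1) * (2 * k * (L - 2) - (k - 1) * t) * t.choose k ≤
      t * (k + 1) * (L - k - 1) * (L - 1).choose k := by
  obtain ⟨n, rfl⟩ : ∃ n, L = n + 2 := ⟨L - 2, by omega⟩
  have hn : (0 : ℝ) < n := by exact_mod_cast (show 0 < n by omega)
  have ht : (0 : ℝ) < t := by exact_mod_cast (show 0 < t by omega)
  have hmono := monotoneOn_sub_mul_choose_div (n := n) (a := 2 * k * n) hk (by
    have : (0 : ℝ) ≤ k * n := by positivity
    linarith) ⟨hkt, by omega⟩ ⟨by omega, le_rfl⟩ (by omega)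
  have hrec := cast_choose_mul_succ_eq n k (by omega)
  simp only [show n + 2 - 1 = n + 1 by omega]
  push_cast
  have hend : (2 * k * n - (k - 1) * n : ℝ) * n.choose k / n = (k + 1) * n.choose k := by
    field_simp
    ring
  dsimp only at hmono
  rw [hend, div_le_iff₀ ht] at hmono
  linear_combination ((n : ℝ) + 1) * hmono + t * (k + 1) * hrec

theorem stmt14_general (L k t : ℕ) (hk : 2 ≤ k) (hkt : k ≤ t)
    (htL : t + 2 ≤ L) :
    0 < (t : ℝ) * ((L - 1).choose k : ℝ) - ((t : ℝ) - (k : ℝ)) * (t.choose k : ℝ) ∧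
      0 < (t : ℝ) * ((L - 1).choose k : ℝ) - ((L : ℝ) - 1) * (t.choose k : ℝ) ∧
      ((k : ℝ) - 1) / (k : ℝ) * (((L : ℝ) - 1) / (2 * (L : ℝ) - (k : ℝ) - 3)) ≤
        ((t : ℝ) * ((L - 1).choose k : ℝ) - ((L : ℝ) - 1) * (t.choose k : ℝ)) /
          ((t : ℝ) * ((L - 1).choose k : ℝ) - ((t : ℝ) - (k : ℝ)) * (t.choose k : ℝ)) := by
  have hkey := sub_mul_choose_le_mul_choose L k t (by omega) hkt htL
  have hk' : (2 : ℝ) ≤ k := by exact_mod_cast hk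
  have hkt' : (k : ℝ) ≤ t := by exact_mod_cast hkt
  have htL' : (t : ℝ) + 2 ≤ L := by exact_mod_cast htL
  have hb : (0 : ℝ) < t.choose k := by exact_mod_cast Nat.choose_pos hkt
  have hbc : (t.choose k : ℝ) ≤ (L - 1).choose k := by
    exact_mod_cast Nat.choose_le_choose k (by omega)
  have hα : 0 < (t : ℝ) * (L - 1).choose k - (t - k) * t.choose k := by
    nlinarith [mul_le_mul_of_nonneg_left hbc (by positivity : (0 : ℝ) ≤ t)]
  have hD : (0 : ℝ) < k * (2 * L - k - 3) := by nlinarith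
  have hβα : ((k : ℝ) - 1) * (L - 1) * ((t : ℝ) * (L - 1).choose k - (t - k) * t.choose k) ≤
      k * (2 * L - k - 3) * ((t : ℝ) * (L - 1).choose k - (L - 1) * t.choose k) := by
    -- the difference of the two sides is the slack in `hkey`
    linear_combination hkey
  have hβ : 0 < (t : ℝ) * (L - 1).choose k - (L - 1) * t.choose k :=
    pos_of_mul_pos_right ((mul_pos (mul_pos (by linarith) (by linarith)) hα).trans_le hβα) hD.le
  refine ⟨hα, hβ, ?_⟩
  rw [div_mul_div_comm, div_le_div_iff₀ hD hα]
  linarith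

/-- For integers `2 ≤ k ≤ L−2` and `k ≤ t ≤ L−2`, with
`α(k,t) = t·C(L−1,k) − (t−k)·C(t,k)` and `β(k,t) = t·C(L−1,k) − (L−1)·C(t,k)`:
`α > 0`, `β > 0`, and `β/α ≥ ((k−1)/k)·(L−1)/(2L−k−3)`. -/
theorem stmt14 (L k t : ℕ) (hk : 2 ≤ k) (hkL : k + 2 ≤ L) (hkt : k ≤ t)
    (htL : t + 2 ≤ L) :
    0 < (t : ℝ) * ((L - 1).choose k : ℝ) - ((t : ℝ) - (k : ℝ)) * (t.choose k : ℝ) ∧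
      0 < (t : ℝ) * ((L - 1).choose k : ℝ) - ((L : ℝ) - 1) * (t.choose k : ℝ) ∧
      ((k : ℝ) - 1) / (k : ℝ) * (((L : ℝ) - 1) / (2 * (L : ℝ) - (k : ℝ) - 3)) ≤
        ((t : ℝ) * ((L - 1).choose k : ℝ) - ((L : ℝ) - 1) * (t.choose k : ℝ)) /
          ((t : ℝ) * ((L - 1).choose k : ℝ) - ((t : ℝ) - (k : ℝ)) * (t.choose k : ℝ)) :=
  stmt14_general L k t hk hkt htL
end

section
/- If p ∈ 𝒫* (equivalently, r*(p) ∈ R(p)), then the minimum of r_1 + ⋯ + r_L over all r ∈ R(p) equals ‖h(p)‖/(L−1) and is attained at r*(p); moreover every r′ ∈ R(p) satisfies r′_1 + ⋯ + r′_L ≥ r*_1 + ⋯ + r*_L = ‖h(p)‖/(L−1). -/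
open Finset Real

/-!
Summing the constraints of `R(p)` for the sets `S = ℓᶜ` over all `ℓ` counts every `r_i` exactly
`L - 1` times, so `‖h(p)‖ ≤ (L - 1) ∑ r` on `R(p)`. A witness of `p ∈ 𝒫*` attains equality, and
then `r_ℓ = ∑ r - ∑_{i ≠ ℓ} r_i` forces it to be `r*(p)`.
-/

theorem Finset.sum_sum_compl_singleton {ι R : Type*} [Fintype ι] [DecidableEq ι] [CommRing R]
    (f : ι → R) : ∑ a, ∑ i ∈ ({a}ᶜ : Finset ι), f i = ((Fintype.card ι : R) - 1) * ∑ i, f i := by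
  have hcompl (a : ι) : ∑ i ∈ ({a}ᶜ : Finset ι), f i = ∑ i, f i - f a := by
    rw [Fintype.sum_eq_add_sum_compl a f]; ring
  simp only [hcompl, sum_sub_distrib, sum_const, card_univ, nsmul_eq_mul]
  ring

namespace MWRC

variable {L : ℕ} {W : Fin L → Type*} [∀ i, Fintype (W i)] [∀ i, DecidableEq (W i)]

theorem sum_rstar (hL : 2 ≤ L) (p : (∀ i, W i) → ℝ) :
    ∑ ℓ, rstar p ℓ = hNorm p / ((L : ℝ) - 1) := by
  have hL1 : (L : ℝ) - 1 ≠ 0 := (sub_pos.mpr (Nat.one_lt_cast.mpr hL)).ne'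
  simp only [rstar, sum_sub_distrib, sum_const, card_univ, Fintype.card_fin, nsmul_eq_mul]
  rw [← hNorm]
  field_simp
  ring

theorem hNorm_le_of_mem_Rset {p : (∀ i, W i) → ℝ} {r : Fin L → ℝ} (hr : r ∈ Rset p) :
    hNorm p ≤ ((L : ℝ) - 1) * ∑ ℓ, r ℓ := by
  have hcompl_lt (ℓ : Fin L) : ({ℓ}ᶜ : Finset (Fin L)) ⊂ univ :=
    ssubset_univ_iff.mpr (({ℓ} : Finset (Fin L)).compl_ne_univ_iff_nonempty.mpr
      (singleton_nonempty ℓ))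
  calc hNorm p ≤ ∑ ℓ, ∑ i ∈ ({ℓ}ᶜ : Finset (Fin L)), r i :=
        sum_le_sum fun ℓ _ => by simpa using hr.2 {ℓ}ᶜ (hcompl_lt ℓ)
    _ = ((L : ℝ) - 1) * ∑ ℓ, r ℓ := by rw [sum_sum_compl_singleton, Fintype.card_fin]

theorem eq_rstar_of_sum_compl_eq (hL : 2 ≤ L) {p : (∀ i, W i) → ℝ} {r : Fin L → ℝ}
    (hr : ∀ ℓ : Fin L, ∑ i ∈ ({ℓ}ᶜ : Finset (Fin L)), r i = condEnt p {ℓ}ᶜ {ℓ}) :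
    r = rstar p := by
  have hL1 : (L : ℝ) - 1 ≠ 0 := (sub_pos.mpr (Nat.one_lt_cast.mpr hL)).ne'
  have hsum : ∑ ℓ, r ℓ = hNorm p / ((L : ℝ) - 1) := by
    rw [eq_div_iff hL1, hNorm, ← sum_congr rfl fun ℓ _ => hr ℓ, sum_sum_compl_singleton,
      Fintype.card_fin, mul_comm]
  funext ℓ
  have hsplit := Fintype.sum_eq_add_sum_compl ℓ r
  rw [hr ℓ, hsum] at hsplit
  rw [rstar]
  linarith

end MWRC

open MWRC Finset

theorem stmt17_general {L : ℕ} (hL : 2 ≤ L) {W : Fin L → Type*} [∀ i, Fintype (W i)]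
    [∀ i, DecidableEq (W i)] (p : (∀ i, W i) → ℝ)
    (hPs : Pstar p) :
    rstar p ∈ Rset p ∧
      (∑ ℓ : Fin L, rstar p ℓ) = hNorm p / ((L : ℝ) - 1) ∧
      ∀ r' ∈ Rset p, hNorm p / ((L : ℝ) - 1) ≤ ∑ ℓ : Fin L, r' ℓ := by
  obtain ⟨r, hrR, hr⟩ := hPs
  refine ⟨eq_rstar_of_sum_compl_eq hL hr ▸ hrR, sum_rstar hL p, fun r' hr' => ?_⟩
  rw [div_le_iff₀ (sub_pos.mpr (Nat.one_lt_cast.mpr hL)), mul_comm]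
  exact hNorm_le_of_mem_Rset hr'

/-- If `p ∈ 𝒫*` then the minimum of `r_1 + ⋯ + r_L` over `R(p)`
equals `‖h(p)‖/(L−1)` and is attained at `r*(p)`. -/
theorem stmt17 {L : ℕ} (hL : 2 ≤ L) {W : Fin L → Type*} [∀ i, Fintype (W i)]
    [∀ i, DecidableEq (W i)] (p : (∀ i, W i) → ℝ) (hp : IsPMF p)
    (hPs : Pstar p) :
    rstar p ∈ Rset p ∧
      (∑ ℓ : Fin L, rstar p ℓ) = hNorm p / ((L : ℝ) - 1) ∧
      ∀ r' ∈ Rset p, hNorm p / ((L : ℝ) - 1) ≤ ∑ ℓ : Fin L, r' ℓ :=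
  stmt17_general hL p hPs
end
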